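/- Let c ∈ ℝ be any fixed real number and let ψ : ℝ → [0,1] be the triangle-wave activation ψ(x) = (1/π)·arccos(cos(2πx)). If Y is a real random variable uniformly distributed on [0,1], then ψ(Y + c) is uniformly distributed on [0,1]; that is, the pushforward of the uniform probability measure on [0,1] under the map y ↦ ψ(y + c) is the uniform probability measure on [0,1]. -/

import Mathlib

open MeasureTheory Real

/-- The triangle-wave activation `ψ(x) = (1/π) · arccos(cos(2πx))`. -/
noncomputable def triangleWave (x : ℝ) : ℝ := (1 / π) * arccos (cos (2 * π * x))

/-!
`ψ` is `1`-periodic, so the law of `ψ(Y + c)` is the pushforward of Lebesgue measure on the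
window `[c, c + 1]`, which does not depend on `c`: both windows project onto the circle `ℝ/ℤ`
with its Haar measure. On `[0, 1]` the map `ψ` is the tent `2x` on `[0, 1/2]` and `2 - 2x` on
`[1/2, 1]`, each an affine bijection onto `[0, 1]` that carries Lebesgue measure to half of it.
-/

open Set

theorem Real.map_volume_mul_add {a : ℝ} (ha : a ≠ 0) (b : ℝ) :
    Measure.map (fun x => a * x + b) volume = ENNReal.ofReal |a⁻¹| • volume := by
  have hcomp : (fun x : ℝ => a * x + b) = (· + b) ∘ (a * ·) := rfl
  rw [hcomp, ← Measure.map_map (measurable_add_const b) (measurable_const_mul a),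
    Real.map_volume_mul_left ha, Measure.map_smul, map_add_right_eq_self]

theorem Real.map_volume_restrict_preimage_mul_add {a : ℝ} (ha : a ≠ 0) (b : ℝ) (s : Set ℝ) :
    Measure.map (fun x => a * x + b) (volume.restrict ((fun x => a * x + b) ⁻¹' s)) =
      ENNReal.ofReal |a⁻¹| • volume.restrict s := by
  have hemb : MeasurableEmbedding (fun x : ℝ => a * x + b) :=
    (measurableEmbedding_addRight b).comp (measurableEmbedding_mulLeft₀ ha)
  rw [← hemb.restrict_map, Real.map_volume_mul_add ha, Measure.restrict_smul]

theorem Real.map_add_const_volume_restrict_Icc (a b c : ℝ) :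
    Measure.map (· + c) (volume.restrict (Icc a b)) = volume.restrict (Icc (a + c) (b + c)) := by
  have hpre : Icc a b = (· + c) ⁻¹' Icc (a + c) (b + c) := by
    rw [preimage_add_const_Icc, add_sub_cancel_right, add_sub_cancel_right]
  rw [hpre, ← (measurableEmbedding_addRight c).restrict_map, map_add_right_eq_self]

section Periodic

variable {α : Type*} [TopologicalSpace α] [MeasurableSpace α] [BorelSpace α] {f : ℝ → α}
  {T : ℝ}

theorem Function.Periodic.map_volume_restrict_Ioc_eq (hf : Function.Periodic f T)
    (hT : 0 < T) (hc : Continuous f) (s t : ℝ) :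
    Measure.map f (volume.restrict (Ioc s (s + T))) =
      Measure.map f (volume.restrict (Ioc t (t + T))) := by
  have := Fact.mk hT
  have hlift : f = (hf.lift : AddCircle T → α) ∘ ((↑) : ℝ → AddCircle T) :=
    funext fun x => (hf.lift_coe x).symm
  have hlift_cont : Continuous (hf.lift : AddCircle T → α) := hc.quotient_lift _
  rw [hlift, ← Measure.map_map hlift_cont.measurable AddCircle.measurable_mk',
    ← Measure.map_map hlift_cont.measurable AddCircle.measurable_mk',
    (AddCircle.measurePreserving_mk T s).map_eq, (AddCircle.measurePreserving_mk T t).map_eq]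

theorem Function.Periodic.map_volume_restrict_Icc_eq (hf : Function.Periodic f T)
    (hT : 0 < T) (hc : Continuous f) (s t : ℝ) :
    Measure.map f (volume.restrict (Icc s (s + T))) =
      Measure.map f (volume.restrict (Icc t (t + T))) := by
  simpa only [Measure.restrict_congr_set Ioc_ae_eq_Icc] using
    hf.map_volume_restrict_Ioc_eq hT hc s t

end Periodic

theorem continuous_triangleWave : Continuous triangleWave := by
  unfold triangleWave
  fun_prop

theorem triangleWave_periodic : Function.Periodic triangleWave 1 := by
  intro x
  simp only [triangleWave, mul_add, mul_one, cos_add_two_pi]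

theorem triangleWave_eq_two_mul {x : ℝ} (hx : x ∈ Icc 0 (1 / 2)) : triangleWave x = 2 * x := by
  have hπ := pi_pos
  rw [triangleWave, arccos_cos (by nlinarith [hx.1]) (by nlinarith [hx.2])]
  field_simp

theorem triangleWave_eq_two_sub_two_mul {x : ℝ} (hx : x ∈ Icc (1 / 2) 1) :
    triangleWave x = 2 - 2 * x := by
  have hπ := pi_pos
  have hcos : cos (2 * π * x) = cos (2 * π * (1 - x)) := by
    rw [mul_one_sub, cos_two_pi_sub]
  rw [triangleWave, hcos, arccos_cos (by nlinarith [hx.2]) (by nlinarith [hx.1])]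
  field_simp

theorem map_triangleWave_volume_restrict_Icc_zero_half :
    Measure.map triangleWave (volume.restrict (Icc 0 (1 / 2))) =
      ENNReal.ofReal |2⁻¹| • volume.restrict (Icc 0 1) := by
  have hpre : (fun x : ℝ => 2 * x + 0) ⁻¹' Icc 0 1 = Icc 0 (1 / 2) := by
    ext x
    simp only [mem_preimage, mem_Icc]
    constructor <;> rintro ⟨h₀, h₁⟩ <;> constructor <;> linarith
  rw [← Real.map_volume_restrict_preimage_mul_add two_ne_zero 0, hpre]
  refine Measure.map_congr (ae_restrict_of_forall_mem measurableSet_Icc fun x hx => ?_)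
  rw [triangleWave_eq_two_mul hx]
  ring

theorem map_triangleWave_volume_restrict_Icc_half_one :
    Measure.map triangleWave (volume.restrict (Icc (1 / 2) 1)) =
      ENNReal.ofReal |(-2)⁻¹| • volume.restrict (Icc 0 1) := by
  have hpre : (fun x : ℝ => -2 * x + 2) ⁻¹' Icc 0 1 = Icc (1 / 2) 1 := by
    ext x
    simp only [mem_preimage, mem_Icc]
    constructor <;> rintro ⟨h₀, h₁⟩ <;> constructor <;> linarith
  rw [← Real.map_volume_restrict_preimage_mul_add (by norm_num) 2, hpre]
  refine Measure.map_congr (ae_restrict_of_forall_mem measurableSet_Icc fun x hx => ?_)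
  rw [triangleWave_eq_two_sub_two_mul hx]
  ring

theorem map_triangleWave_volume_restrict_Icc_zero_one :
    Measure.map triangleWave (volume.restrict (Icc 0 1)) = volume.restrict (Icc 0 1) := by
  have hsplit : volume.restrict (Icc (0 : ℝ) 1) =
      volume.restrict (Icc 0 (1 / 2)) + volume.restrict (Icc (1 / 2) 1) := by
    rw [← Measure.restrict_union₀ _ measurableSet_Icc.nullMeasurableSet,
      Icc_union_Icc_eq_Icc (by norm_num) (by norm_num)]
    refine measure_mono_null (fun x hx => ?_) (Real.volume_singleton (a := 1 / 2))
    exact le_antisymm hx.1.2 hx.2.1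
  conv_lhs => rw [hsplit]
  rw [Measure.map_add _ _ continuous_triangleWave.measurable,
    map_triangleWave_volume_restrict_Icc_zero_half, map_triangleWave_volume_restrict_Icc_half_one,
    ← add_smul, ← ENNReal.ofReal_add (abs_nonneg _) (abs_nonneg _)]
  norm_num

/-- If `Y` is uniformly distributed on `[0,1]`, then for any fixed shift `c`,
`ψ(Y + c)` is again uniformly distributed on `[0,1]`: the pushforward of the uniform
probability measure on `[0,1]` under `y ↦ ψ(y + c)` is that same uniform measure. -/
theorem triangleWave_shift_preserves_uniform (c : ℝ) :
    Measure.map (fun y : ℝ => triangleWave (y + c))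
      (volume.restrict (Set.Icc (0 : ℝ) 1)) =
    volume.restrict (Set.Icc (0 : ℝ) 1) := by
  have hcomp : (fun y : ℝ => triangleWave (y + c)) = triangleWave ∘ (· + c) := rfl
  rw [hcomp, ← Measure.map_map continuous_triangleWave.measurable (measurable_add_const c),
    Real.map_add_const_volume_restrict_Icc, zero_add, add_comm 1 c,
    triangleWave_periodic.map_volume_restrict_Icc_eq one_pos continuous_triangleWave c 0,
    zero_add, map_triangleWave_volume_restrict_Icc_zero_one]
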